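/- For any vector u ∈ U^K, the set M = {w ∈ U^K : marg w = Q} is nonempty whenever Q : U → ℚ takes values in multiples of 1/K, is nonnegative, and sums to 1; moreover min_{w ∈ M} #{k : w_k ≠ u_k} = K · d(marg u, Q). -/

import Mathlib

open Finset

noncomputable def marg {U : Type*} [Fintype U] [DecidableEq U] {K : ℕ} (w : Fin K → U) (x : U) : ℚ :=
  ((Finset.univ.filter fun k => w k = x).card : ℚ) / K

noncomputable def tv {U : Type*} [Fintype U] (Q Q' : U → ℚ) : ℚ :=
  ∑ x : U, max (Q x - Q' x) 0

/-! Write `c_w x` for the number of positions at which `w` takes the value `x`, so that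
`K · marg w = c_w` and `K · d(marg u, Q) = ∑ₓ (c_u x - K Q(x))⁺`. At least `(c_u x - c_w x)⁺` of the
positions where `u` equals `x` must carry a different value of `w`, which gives the lower bound.
Conversely, among the `w` with prescribed counts take one with the fewest mismatches: if some value
`x` were both removed by `w` from a position where `u` has it and placed by `w` at a position where
`u` does not have it, exchanging these two entries of `w` would remove a mismatch. So each value
accounts for exactly `(c_u x - c_w x)⁺` mismatches. -/

section FiberCard

variable {ι U : Type*} [Fintype ι] [DecidableEq U]

def fiberCard (w : ι → U) (x : U) : ℕ := #{k | w k = x}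

lemma fiberCard_comp_perm (w : ι → U) (σ : Equiv.Perm ι) : fiberCard (w ∘ σ) = fiberCard w :=
  funext fun _ => card_equiv σ (by simp)

lemma fiberCard_sigma_fst [Fintype U] (n : U → ℕ) (x : U) :
    fiberCard (Sigma.fst : (Σ y, Fin (n y)) → U) x = n x := by
  have : ({p | p.1 = x} : Finset (Σ y, Fin (n y))) = univ.map (Function.Embedding.sigmaMk x) := by
    ext ⟨y, i⟩
    simp only [mem_filter, mem_univ, true_and, mem_map, Function.Embedding.sigmaMk_apply]
    constructor
    · rintro rfl; exact ⟨i, rfl⟩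
    · rintro ⟨j, hj⟩; cases hj; rfl
  rw [fiberCard, this, card_map, card_univ, Fintype.card_fin]

lemma exists_fiberCard_eq [Fintype U] (n : U → ℕ) (hn : ∑ x, n x = Fintype.card ι) :
    ∃ w : ι → U, fiberCard w = n := by
  let e : ι ≃ Σ x, Fin (n x) := Fintype.equivOfCardEq (by simp [hn])
  refine ⟨Sigma.fst ∘ e, funext fun x => ?_⟩
  rw [← fiberCard_sigma_fst n x]
  exact card_equiv e (by simp)

lemma card_ne_eq_sum_card_fiber_ne [Fintype U] (u w : ι → U) :
    #{k | w k ≠ u k} = ∑ x, #{k | u k = x ∧ w k ≠ x} := by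
  rw [card_eq_sum_card_fiberwise fun k _ => mem_univ (u k)]
  refine sum_congr rfl fun x _ => congrArg card ?_
  ext k
  simp only [mem_filter, mem_univ, true_and]
  constructor
  · rintro ⟨hne, rfl⟩; exact ⟨rfl, hne⟩
  · rintro ⟨rfl, hne⟩; exact ⟨hne, rfl⟩

lemma fiberCard_tsub_le_card_fiber_ne (u w : ι → U) (x : U) :
    fiberCard u x - fiberCard w x ≤ #{k | u k = x ∧ w k ≠ x} := by
  classical
  rw [tsub_le_iff_right, fiberCard, fiberCard]
  refine (card_le_card fun k hk => ?_).trans (card_union_le _ _)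
  by_cases hw : w k = x <;> simp_all

lemma sum_fiberCard_tsub_le_card_ne [Fintype U] (u w : ι → U) :
    ∑ x, (fiberCard u x - fiberCard w x) ≤ #{k | w k ≠ u k} := by
  rw [card_ne_eq_sum_card_fiber_ne]
  exact sum_le_sum fun x _ => fiberCard_tsub_le_card_fiber_ne u w x

lemma card_fiber_ne_le_fiberCard_tsub (u w : ι → U) (x : U)
    (h : (∃ i, u i = x ∧ w i ≠ x) → ∀ j, w j = x → u j = x) :
    #{k | u k = x ∧ w k ≠ x} ≤ fiberCard u x - fiberCard w x := by
  classical
  by_cases hx : ∃ i, u i = x ∧ w i ≠ x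
  · have hwu : ∀ k, w k = x → u k = x := h hx
    have hle : fiberCard w x ≤ fiberCard u x := card_le_card fun k => by simpa using hwu k
    rw [le_tsub_iff_left hle, fiberCard, fiberCard, ← card_union_of_disjoint
      (disjoint_filter.2 fun k _ hk hk' => hk'.2 hk)]
    exact card_le_card fun k hk => by simp at hk ⊢; tauto
  · simp only [not_exists, not_and] at hx
    simp [filter_false_of_mem fun k _ => not_and.2 (hx k)]

lemma card_ne_comp_swap_lt [DecidableEq ι] (u w : ι → U) {i j : ι} (hi : w i ≠ u i)
    (hj : w j = u i) (hj' : w j ≠ u j) :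
    #{k | (w ∘ Equiv.swap i j) k ≠ u k} < #{k | w k ≠ u k} := by
  refine (card_le_card fun k hk => ?_).trans_lt (card_erase_lt_of_mem (a := i) (by simpa using hi))
  simp only [mem_filter, mem_univ, true_and, mem_erase, Function.comp_apply] at hk ⊢
  rcases eq_or_ne k i with rfl | hki
  · simp [hj] at hk
  rcases eq_or_ne k j with rfl | hkj
  · exact ⟨hki, hj'⟩
  · rw [Equiv.swap_apply_of_ne_of_ne hki hkj] at hk
    exact ⟨hki, hk⟩

theorem exists_fiberCard_eq_card_ne_eq [Fintype U] (n : U → ℕ)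
    (hn : ∑ x, n x = Fintype.card ι) (u : ι → U) :
    ∃ w : ι → U, fiberCard w = n ∧ #{k | w k ≠ u k} = ∑ x, (fiberCard u x - n x) := by
  classical
  obtain ⟨w₀, hw₀⟩ := exists_fiberCard_eq n hn
  obtain ⟨w, hw, hmin⟩ := exists_min_image {w | fiberCard w = n} (fun w => #{k | w k ≠ u k})
    ⟨w₀, by simpa using hw₀⟩
  simp only [mem_filter, mem_univ, true_and] at hw hmin
  subst hw
  refine ⟨w, rfl, le_antisymm ?_ (sum_fiberCard_tsub_le_card_ne u w)⟩
  rw [card_ne_eq_sum_card_fiber_ne]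
  refine sum_le_sum fun x _ => card_fiber_ne_le_fiberCard_tsub u w x ?_
  rintro ⟨i, rfl, hi⟩ j hj
  by_contra hj'
  exact (hmin _ (fiberCard_comp_perm w (Equiv.swap i j))).not_gt
    (card_ne_comp_swap_lt u w hi hj (hj ▸ Ne.symm hj'))

end FiberCard

lemma natCast_tsub_eq_max {R : Type*} [Ring R] [LinearOrder R] [IsStrictOrderedRing R] (a b : ℕ) :
    ((a - b : ℕ) : R) = max ((a : R) - b) 0 := by
  rcases le_total b a with h | h
  · rw [Nat.cast_sub h, max_eq_left (sub_nonneg.2 (Nat.cast_le.2 h))]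
  · rw [Nat.sub_eq_zero_of_le h, Nat.cast_zero, max_eq_right (sub_nonpos.2 (Nat.cast_le.2 h))]

section Marg

variable {U : Type*} [Fintype U] [DecidableEq U] {K : ℕ}

lemma marg_apply (w : Fin K → U) (x : U) : marg w x = fiberCard w x / K := rfl

lemma marg_eq_div_iff (hK : K ≠ 0) (w : Fin K → U) (n : U → ℕ) :
    marg w = (fun x => (n x : ℚ) / K) ↔ fiberCard w = n := by
  have hK' : (K : ℚ) ≠ 0 := Nat.cast_ne_zero.2 hK
  simp only [funext_iff, marg_apply, div_left_inj' hK', Nat.cast_inj]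

lemma mul_tv_marg_div (hK : K ≠ 0) (u : Fin K → U) (n : U → ℕ) :
    K * tv (marg u) (fun x => (n x : ℚ) / K) = ((∑ x, (fiberCard u x - n x) : ℕ) : ℚ) := by
  have hK' : (K : ℚ) ≠ 0 := Nat.cast_ne_zero.2 hK
  simp only [tv, marg_apply, ← sub_div, Nat.cast_sum, natCast_tsub_eq_max, mul_sum]
  refine sum_congr rfl fun x _ => ?_
  rw [mul_max_of_nonneg _ _ (Nat.cast_nonneg K), mul_zero, mul_div_cancel₀ _ hK']

end Marg

theorem stmt18_general {U : Type*} [Fintype U] [DecidableEq U] {K : ℕ} (hK : 0 < K)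
    (u : Fin K → U) (Q : U → ℚ)
    (hQ1 : ∑ x : U, Q x = 1)
    (hQK : ∀ x, ∃ n : ℕ, Q x = (n : ℚ) / K) :
    (∃ w : Fin K → U, marg w = Q) ∧
    IsLeast {n : ℚ | ∃ w : Fin K → U, marg w = Q ∧
        n = ((Finset.univ.filter fun k => w k ≠ u k).card : ℚ)}
      ((K : ℚ) * tv (marg u) Q) := by
  choose n hn using hQK
  obtain rfl : Q = fun x => (n x : ℚ) / K := funext hn
  have hK₀ : K ≠ 0 := hK.ne'
  have hnK : ∑ x, n x = Fintype.card (Fin K) := by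
    rw [Fintype.card_fin, ← Nat.cast_inj (R := ℚ), ← div_eq_one_iff_eq (Nat.cast_ne_zero.2 hK₀),
      Nat.cast_sum, sum_div, hQ1]
  obtain ⟨w, hw, hmin⟩ := exists_fiberCard_eq_card_ne_eq n hnK u
  rw [mul_tv_marg_div hK₀]
  have hw' := (marg_eq_div_iff hK₀ w n).2 hw
  refine ⟨⟨w, hw'⟩, ⟨w, hw', by rw [hmin]⟩, ?_⟩
  rintro _ ⟨v, hv, rfl⟩
  rw [marg_eq_div_iff hK₀] at hv
  exact_mod_cast hv ▸ sum_fiberCard_tsub_le_card_ne u v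

theorem stmt18 {U : Type*} [Fintype U] [DecidableEq U] [Nonempty U] {K : ℕ} (hK : 0 < K)
    (u : Fin K → U) (Q : U → ℚ)
    (hQ0 : ∀ x, 0 ≤ Q x) (hQ1 : ∑ x : U, Q x = 1)
    (hQK : ∀ x, ∃ n : ℕ, Q x = (n : ℚ) / K) :
    (∃ w : Fin K → U, marg w = Q) ∧
    IsLeast {n : ℚ | ∃ w : Fin K → U, marg w = Q ∧
        n = ((Finset.univ.filter fun k => w k ≠ u k).card : ℚ)}
      ((K : ℚ) * tv (marg u) Q) :=
  stmt18_general hK u Q hQ1 hQK
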